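/- arXiv:2104.04082 — 2 statements merged into one kernel-verified Lean document; each statement's English description precedes it below -/
import Mathlib

section
/- Let 0 < α < 1, δ ≥ 0, and let t < T be real numbers. Then ∫_t^T (s − t)^{-α} · e^{-δ s} ds = Γ(1 − α) · e^{-δ T} · (T − t)^{1 − α} · Σ_{k=0}^∞ (δ (T − t))^k / Γ(k + 2 − α). Equivalently, the right Caputo fractional derivative of order α of the function s ↦ −e^{-δ s} on [t, T], namely −(1/Γ(1-α)) ∫_t^T (s − t)^{-α} · (d/ds)(−e^{-δ s}) ds, equals −δ · (T − t)^{1 − α} · e^{-δ T} · E_{1, 2−α}(δ (T − t)). -/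
/-!
Write `e^{-δ s} = e^{-δ T} e^{δ (T - s)}` and expand the second factor in its exponential series;
dominated convergence (with majorant `(s - t)^{-α} e^{|δ| (T - t)}`) lets the series be
integrated term by term. Each term is a Beta integral,
`∫_t^T (s - t)^{-α} (T - s)^k ds = Γ(1 - α) k! (T - t)^{k + 1 - α} / Γ(k + 2 - α)`,
and the `k!` cancels against the exponential series. The Caputo form follows from
`d/ds (-e^{-δ s}) = δ e^{-δ s}`.
-/

open Real MeasureTheory intervalIntegral
open scoped Nat

theorem integral_rpow_mul_one_sub_rpow {a b : ℝ} (ha : 0 < a) (hb : 0 < b) :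
    ∫ v in (0 : ℝ)..1, v ^ (a - 1) * (1 - v) ^ (b - 1) = Gamma a * Gamma b / Gamma (a + b) := by
  have hbeta : Complex.betaIntegral a b =
      ↑(∫ v in (0 : ℝ)..1, v ^ (a - 1) * (1 - v) ^ (b - 1)) := by
    rw [Complex.betaIntegral, ← integral_ofReal]
    refine integral_congr fun v hv => ?_
    rw [Set.uIcc_of_le zero_le_one] at hv
    simp only [Complex.ofReal_mul, Complex.ofReal_cpow hv.1,
      Complex.ofReal_cpow (sub_nonneg.2 hv.2)]
    push_cast
    rfl
  have h := Complex.Gamma_mul_Gamma_eq_betaIntegral (s := a) (t := b) (by simpa) (by simpa)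
  rw [hbeta, ← Complex.ofReal_add] at h
  simp only [Complex.Gamma_ofReal] at h
  norm_cast at h
  rw [h, mul_div_cancel_left₀ _ (Gamma_pos_of_pos (add_pos ha hb)).ne']

theorem integral_sub_rpow_mul_sub_rpow {a b t T : ℝ} (ha : 0 < a) (hb : 0 < b) (htT : t < T) :
    ∫ s in t..T, (s - t) ^ (a - 1) * (T - s) ^ (b - 1) =
      Gamma a * Gamma b / Gamma (a + b) * (T - t) ^ (a + b - 1) := by
  have hc : 0 < T - t := sub_pos.2 htT
  have hsub := integral_comp_add_mul (fun s => (s - t) ^ (a - 1) * (T - s) ^ (b - 1)) hc.ne' t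
    (a := 0) (b := 1)
  simp only [mul_zero, add_zero, mul_one, add_sub_cancel, smul_eq_mul] at hsub
  have hscale : ∀ v ∈ Set.uIcc (0 : ℝ) 1,
      (t + (T - t) * v - t) ^ (a - 1) * (T - (t + (T - t) * v)) ^ (b - 1) =
        (T - t) ^ (a - 1) * (T - t) ^ (b - 1) * (v ^ (a - 1) * (1 - v) ^ (b - 1)) := by
    intro v hv
    rw [Set.uIcc_of_le zero_le_one] at hv
    rw [add_sub_cancel_left, show T - (t + (T - t) * v) = (T - t) * (1 - v) by ring,
      mul_rpow hc.le hv.1, mul_rpow hc.le (sub_nonneg.2 hv.2)]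
    ring
  rw [integral_congr hscale, intervalIntegral.integral_const_mul,
    integral_rpow_mul_one_sub_rpow ha hb, eq_inv_mul_iff_mul_eq₀ hc.ne'] at hsub
  rw [← hsub, show a + b - 1 = 1 + (a - 1) + (b - 1) by ring, rpow_add hc, rpow_add hc, rpow_one]
  ring

theorem hasSum_intervalIntegral_mul_pow_div_factorial {w g : ℝ → ℝ} {a b : ℝ}
    (hw : IntervalIntegrable w volume a b) (hg : ContinuousOn g (Set.uIcc a b)) :
    HasSum (fun k : ℕ => ∫ s in a..b, w s * (g s ^ k / k !))
      (∫ s in a..b, w s * exp (g s)) := by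
  obtain ⟨M, hM⟩ := isCompact_uIcc.exists_bound_of_continuousOn hg
  refine hasSum_integral_of_dominated_convergence (fun k s => ‖w s‖ * (M ^ k / k !))
    (fun k => (hw.mul_continuousOn ((hg.pow k).div_const _)).def'.aestronglyMeasurable)
    (fun k => ae_of_all _ fun s hs => ?_)
    (ae_of_all _ fun s _ => (NormedSpace.expSeries_div_summable M).mul_left ‖w s‖) ?_
    (ae_of_all _ fun s _ => ?_)
  · rw [norm_mul, norm_div, norm_pow, RCLike.norm_natCast]
    gcongr
    exact hM s (Set.uIoc_subset_uIcc hs)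
  · simp_rw [tsum_mul_left]
    exact hw.norm.mul_const _
  · rw [exp_eq_exp_ℝ]
    exact (NormedSpace.expSeries_div_hasSum_exp (g s)).mul_left (w s)

theorem hasSum_integral_sub_rpow_mul_exp {α δ t T : ℝ} (hα : α < 1) (htT : t < T) :
    HasSum (fun k : ℕ => Gamma (1 - α) * (T - t) ^ (1 - α) *
        ((δ * (T - t)) ^ k / Gamma ((k : ℝ) + 2 - α)))
      (∫ s in t..T, (s - t) ^ (-α) * exp (δ * (T - s))) := by
  have hw : IntervalIntegrable (fun s => (s - t) ^ (-α)) volume t T := by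
    simpa using (intervalIntegrable_rpow' (by linarith : -1 < -α)).comp_sub_right
      (a := 0) (b := T - t) t
  have hterm : ∀ k : ℕ, ∫ s in t..T, (s - t) ^ (-α) * ((δ * (T - s)) ^ k / k !) =
      Gamma (1 - α) * (T - t) ^ (1 - α) * ((δ * (T - t)) ^ k / Gamma ((k : ℝ) + 2 - α)) := by
    intro k
    have hbeta := integral_sub_rpow_mul_sub_rpow (a := 1 - α) (b := k + 1) (by linarith)
      (by positivity) htT
    simp only [sub_sub_cancel_left, add_sub_cancel_right, rpow_natCast,
      Gamma_nat_eq_factorial] at hbeta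
    have hΓ : 0 < Gamma ((k : ℝ) + 2 - α) :=
      Gamma_pos_of_pos (by linarith [k.cast_nonneg (α := ℝ)])
    calc ∫ s in t..T, (s - t) ^ (-α) * ((δ * (T - s)) ^ k / k !)
        = δ ^ k / k ! * ∫ s in t..T, (s - t) ^ (-α) * (T - s) ^ k := by
          rw [← intervalIntegral.integral_const_mul]
          congr 1 with s
          rw [mul_pow]
          ring
      _ = _ := by
          rw [hbeta, show 1 - α + (k + 1) - 1 = (k : ℝ) + (1 - α) by ring,
            show 1 - α + (k + 1) = (k : ℝ) + 2 - α by ring, rpow_add (sub_pos.2 htT),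
            rpow_natCast, mul_pow]
          field_simp
  simpa only [hterm] using hasSum_intervalIntegral_mul_pow_div_factorial hw
    (g := fun s => δ * (T - s)) (by fun_prop)

theorem integral_rpow_mul_exp_eq_mittagLeffler_general
    (α δ t T : ℝ) (hα1 : α < 1) (htT : t < T) :
    (∫ s in t..T, (s - t) ^ (-α) * Real.exp (-δ * s)) =
      Real.Gamma (1 - α) * Real.exp (-δ * T) * (T - t) ^ (1 - α) *
        ∑' k : ℕ, (δ * (T - t)) ^ k / Real.Gamma ((k : ℝ) + 2 - α) ∧
    -(1 / Real.Gamma (1 - α)) *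
        (∫ s in t..T, (s - t) ^ (-α) * deriv (fun u => -Real.exp (-δ * u)) s) =
      -δ * (T - t) ^ (1 - α) * Real.exp (-δ * T) *
        ∑' k : ℕ, (δ * (T - t)) ^ k / Real.Gamma (1 * (k : ℝ) + (2 - α)) := by
  have hintegral : (∫ s in t..T, (s - t) ^ (-α) * exp (-δ * s)) =
      Gamma (1 - α) * exp (-δ * T) * (T - t) ^ (1 - α) *
        ∑' k : ℕ, (δ * (T - t)) ^ k / Gamma ((k : ℝ) + 2 - α) := by
    have hfactor : ∀ s, (s - t) ^ (-α) * exp (-δ * s) =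
        exp (-δ * T) * ((s - t) ^ (-α) * exp (δ * (T - s))) := fun s => by
      rw [mul_left_comm, ← exp_add]; ring_nf
    simp_rw [hfactor, intervalIntegral.integral_const_mul,
      ← (hasSum_integral_sub_rpow_mul_exp hα1 htT).tsum_eq, tsum_mul_left]
    ring
  have hderiv : ∀ s, deriv (fun u => -exp (-δ * u)) s = δ * exp (-δ * s) := fun s => by
    have h : HasDerivAt (fun u => -exp (-δ * u)) (-(exp (-δ * s) * (-δ * 1))) s :=
      ((hasDerivAt_id s).const_mul (-δ)).exp.neg
    rw [h.deriv]
    ring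
  refine ⟨hintegral, ?_⟩
  have hΓ : Gamma (1 - α) ≠ 0 := (Gamma_pos_of_pos (by linarith)).ne'
  simp_rw [hderiv, mul_left_comm _ δ, intervalIntegral.integral_const_mul, hintegral, one_mul,
    ← add_sub_assoc]
  field_simp

/-- `∫_t^T (s-t)^{-α} e^{-δs} ds = Γ(1-α) e^{-δT} (T-t)^{1-α} Σ_k (δ(T-t))^k / Γ(k+2-α)`;
equivalently, the right Caputo derivative of order `α` of `s ↦ -e^{-δs}` on `[t,T]`
equals `-δ (T-t)^{1-α} e^{-δT} E_{1,2-α}(δ(T-t))`. -/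
theorem integral_rpow_mul_exp_eq_mittagLeffler
    (α δ t T : ℝ) (hα0 : 0 < α) (hα1 : α < 1) (hδ : 0 ≤ δ) (htT : t < T) :
    (∫ s in t..T, (s - t) ^ (-α) * Real.exp (-δ * s)) =
      Real.Gamma (1 - α) * Real.exp (-δ * T) * (T - t) ^ (1 - α) *
        ∑' k : ℕ, (δ * (T - t)) ^ k / Real.Gamma ((k : ℝ) + 2 - α) ∧
    -(1 / Real.Gamma (1 - α)) *
        (∫ s in t..T, (s - t) ^ (-α) * deriv (fun u => -Real.exp (-δ * u)) s) =
      -δ * (T - t) ^ (1 - α) * Real.exp (-δ * T) *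
        ∑' k : ℕ, (δ * (T - t)) ^ k / Real.Gamma (1 * (k : ℝ) + (2 - α)) :=
  integral_rpow_mul_exp_eq_mittagLeffler_general α δ t T hα1 htT
end

section
/- Let 0 < α < 1, r > 0, K > 0, δ ≥ 0 and T > 0. Define x*_α : [0,T] → ℝ by x*_α(t) = (K/2)·(1 − (δ/r)·(T − t)^{1−α}·e^{-δ(T−t)}·E_{1,2−α}(δ(T−t))), where E_{1,2−α}(z) = Σ_{k=0}^∞ z^k / Γ(k + 2 − α). Then for every t ∈ [0,T): e^{-δ t}·r·(1 − 2·x*_α(t)/K) − (δ/Γ(1−α))·∫_t^T (s − t)^{-α}·e^{-δ s} ds = 0; that is, x*_α satisfies the fractional Euler–Lagrange equation e^{-δ t}·r·(1 − 2x(t)/K) − δ·(T−t)^{1−α}·e^{-δ T}·E_{1,2−α}(δ(T−t)) = 0 of the fractional harvest problem. -/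
/-!
Put `τ = T - t`. Substituting `u = s - t` and writing `e^{-δ s} = e^{-δ T} e^{δ (τ - u)}` turns
the Caputo integral into `e^{-δ T} ∫₀^τ u^{-α} e^{δ (τ - u)} du`. Expanding the exponential and
integrating term by term with the Beta integral
`∫₀^τ u^{-α} (τ - u)^k du = Γ(1-α) k! τ^{k+1-α} / Γ(k+2-α)` gives
`Γ(1-α) τ^{1-α} e^{-δ T} E_{1,2-α}(δ τ)`; the interchange is dominated convergence, with the
series of `|u^{-α}| |δ (τ - u)|^k / k!` as majorant. The Euler–Lagrange identity is then algebra
in the formula for `x*_α`.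
-/

open Real MeasureTheory Nat

theorem Gamma_natCast_add_two_sub_pos {α : ℝ} (hα : α < 2) (k : ℕ) : 0 < Gamma (k + 2 - α) :=
  Gamma_pos_of_pos (by linarith [(k.cast_nonneg : (0 : ℝ) ≤ k)])

theorem integral_rpow_neg_mul_sub_pow {α τ : ℝ} (hα : α < 1) (hτ : 0 < τ) (k : ℕ) :
    ∫ u in 0..τ, u ^ (-α) * (τ - u) ^ k
      = Gamma (1 - α) * k ! / Gamma (k + 2 - α) * τ ^ (k + 1 - α) := by
  set s : ℂ := ((1 - α : ℝ) : ℂ)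
  have hs : 0 < s.re := by simpa [s] using hα
  have ht : 0 < ((k : ℂ) + 1).re := by
    simp only [Complex.add_re, Complex.natCast_re, Complex.one_re]; positivity
  have hst : s + (k + 1) = ((k + 2 - α : ℝ) : ℂ) := by push_cast [s]; ring
  have hΓ : Complex.Gamma ((k + 2 - α : ℝ) : ℂ) ≠ 0 := by
    rw [Complex.Gamma_ofReal]
    exact Complex.ofReal_ne_zero.mpr (Gamma_natCast_add_two_sub_pos (by linarith) k).ne'
  have hbeta : s.betaIntegral (k + 1)
      = Complex.Gamma s * Complex.Gamma (k + 1) / Complex.Gamma ((k + 2 - α : ℝ) : ℂ) := by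
    rw [eq_div_iff hΓ, ← hst]
    linear_combination -(Complex.Gamma_mul_Gamma_eq_betaIntegral hs ht)
  apply Complex.ofReal_injective
  rw [← intervalIntegral.integral_ofReal]
  calc ∫ u in 0..τ, ((u ^ (-α) * (τ - u) ^ k : ℝ) : ℂ)
      = ∫ u in 0..τ, (u : ℂ) ^ (s - 1) * ((τ : ℂ) - u) ^ (((k : ℂ) + 1) - 1) := by
        refine intervalIntegral.integral_congr fun u hu => ?_
        rw [Set.uIcc_of_le hτ.le] at hu
        rw [add_sub_cancel_right, Complex.cpow_natCast,
          show s - 1 = ((-α : ℝ) : ℂ) by push_cast [s]; ring, ← Complex.ofReal_cpow hu.1]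
        push_cast
        rfl
    _ = _ := by
        rw [Complex.betaIntegral_scaled s _ hτ, hst, hbeta,
          show ((k + 2 - α : ℝ) : ℂ) - 1 = ((k + 1 - α : ℝ) : ℂ) by push_cast; ring,
          ← Complex.ofReal_cpow hτ.le, Complex.Gamma_ofReal, Complex.Gamma_ofReal,
          Complex.Gamma_nat_eq_factorial]
        push_cast
        ring

theorem hasSum_pow_div_factorial_exp (x : ℝ) : HasSum (fun k : ℕ => x ^ k / k !) (exp x) := by
  rw [exp_eq_exp_ℝ]
  exact NormedSpace.expSeries_div_hasSum_exp x

theorem hasSum_integral_rpow_neg_mul_exp {α τ : ℝ} (hα : α < 1) (hτ : 0 < τ) (c : ℝ) :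
    HasSum (fun k : ℕ => Gamma (1 - α) * τ ^ (1 - α) * ((c * τ) ^ k / Gamma (k + 2 - α)))
      (∫ u in 0..τ, u ^ (-α) * exp (c * (τ - u))) := by
  have hrpow : IntervalIntegrable (fun u : ℝ => u ^ (-α)) volume 0 τ :=
    intervalIntegral.intervalIntegrable_rpow' (by linarith)
  have hterm (k : ℕ) : ∫ u in 0..τ, u ^ (-α) * ((c * (τ - u)) ^ k / k !)
      = Gamma (1 - α) * τ ^ (1 - α) * ((c * τ) ^ k / Gamma (k + 2 - α)) := by
    have hpow : τ ^ ((k : ℝ) + 1 - α) = τ ^ k * τ ^ (1 - α) := by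
      rw [← rpow_natCast, ← rpow_add hτ]; ring_nf
    have hfac : (k ! : ℝ) ≠ 0 := by positivity
    have hΓ : Gamma (k + 2 - α) ≠ 0 := (Gamma_natCast_add_two_sub_pos (by linarith) k).ne'
    simp_rw [mul_pow, show ∀ u : ℝ, u ^ (-α) * (c ^ k * (τ - u) ^ k / k !)
      = c ^ k / k ! * (u ^ (-α) * (τ - u) ^ k) from fun u => by ring]
    rw [intervalIntegral.integral_const_mul, integral_rpow_neg_mul_sub_pow hα hτ, hpow]
    field_simp
  rw [← funext hterm]
  refine intervalIntegral.hasSum_integral_of_dominated_convergence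
    (fun k u => ‖u ^ (-α)‖ * (|c * (τ - u)| ^ k / k !)) (fun k => ?_) (fun k => ?_) ?_ ?_ ?_
  · exact (hrpow.mul_continuousOn (by fun_prop)).def'.aestronglyMeasurable
  · refine Filter.Eventually.of_forall fun u _ => ?_
    simp [norm_mul, norm_div, norm_pow]
  · exact Filter.Eventually.of_forall fun u _ =>
      (hasSum_pow_div_factorial_exp _).summable.mul_left _
  · simp_rw [(hasSum_pow_div_factorial_exp _).summable.tsum_mul_left,
      (hasSum_pow_div_factorial_exp _).tsum_eq]
    exact hrpow.norm.mul_continuousOn (by fun_prop)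
  · exact Filter.Eventually.of_forall fun u _ => (hasSum_pow_div_factorial_exp _).mul_left _

theorem integral_rpow_sub_mul_exp_neg {α t T : ℝ} (hα : α < 1) (htT : t < T) (δ : ℝ) :
    ∫ s in t..T, (s - t) ^ (-α) * exp (-δ * s)
      = Gamma (1 - α) * (T - t) ^ (1 - α) * exp (-δ * T) *
        ∑' k : ℕ, (δ * (T - t)) ^ k / Gamma (k + 2 - α) := by
  set f : ℝ → ℝ := fun u => u ^ (-α) * exp (δ * ((T - t) - u))
  calc ∫ s in t..T, (s - t) ^ (-α) * exp (-δ * s)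
      = ∫ s in t..T, exp (-δ * T) * f (s - t) := by
        refine intervalIntegral.integral_congr fun s _ => ?_
        rw [mul_left_comm, ← exp_add]
        ring_nf
    _ = exp (-δ * T) * ∫ u in 0..T - t, f u := by
        rw [intervalIntegral.integral_const_mul, intervalIntegral.integral_comp_sub_right, sub_self]
    _ = _ := by
        rw [← (hasSum_integral_rpow_neg_mul_exp hα (sub_pos.2 htT) δ).tsum_eq, tsum_mul_left]
        ring

theorem fractional_optimal_population_satisfies_euler_lagrange_general
    (α r K δ T : ℝ) (hα1 : α < 1) (hr : 0 < r) (hK : 0 < K)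
    (x : ℝ → ℝ)
    (hx : ∀ t, x t = K / 2 * (1 - δ / r * (T - t) ^ (1 - α) * Real.exp (-δ * (T - t)) *
        ∑' k : ℕ, (δ * (T - t)) ^ k / Real.Gamma ((k : ℝ) + 2 - α))) :
    ∀ t ∈ Set.Ico (0:ℝ) T,
      Real.exp (-δ * t) * r * (1 - 2 * x t / K) -
        δ / Real.Gamma (1 - α) * (∫ s in t..T, (s - t) ^ (-α) * Real.exp (-δ * s)) = 0 ∧
      Real.exp (-δ * t) * r * (1 - 2 * x t / K) -
        δ * (T - t) ^ (1 - α) * Real.exp (-δ * T) *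
          (∑' k : ℕ, (δ * (T - t)) ^ k / Real.Gamma ((k : ℝ) + 2 - α)) = 0 := by
  rintro t ⟨-, htT⟩
  set E := ∑' k : ℕ, (δ * (T - t)) ^ k / Gamma ((k : ℝ) + 2 - α)
  have hΓ : Gamma (1 - α) ≠ 0 := (Gamma_pos_of_pos (by linarith)).ne'
  have hlhs :
      exp (-δ * t) * r * (1 - 2 * x t / K) = δ * (T - t) ^ (1 - α) * exp (-δ * T) * E := by
    have hsplit : exp (-δ * T) = exp (-δ * t) * exp (-δ * (T - t)) := by
      rw [← exp_add]; ring_nf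
    rw [hx, hsplit]
    field_simp
    ring
  rw [hlhs, integral_rpow_sub_mul_exp_neg hα1 htT]
  constructor
  · field_simp
    ring
  · ring

/-- The function `x*_α(t) = (K/2)(1 - (δ/r)(T-t)^{1-α} e^{-δ(T-t)} E_{1,2-α}(δ(T-t)))`
satisfies the fractional Euler–Lagrange equation of the fractional harvest problem. -/
theorem fractional_optimal_population_satisfies_euler_lagrange
    (α r K δ T : ℝ) (hα0 : 0 < α) (hα1 : α < 1) (hr : 0 < r) (hK : 0 < K)
    (hδ : 0 ≤ δ) (hT : 0 < T)
    (x : ℝ → ℝ)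
    (hx : ∀ t, x t = K / 2 * (1 - δ / r * (T - t) ^ (1 - α) * Real.exp (-δ * (T - t)) *
        ∑' k : ℕ, (δ * (T - t)) ^ k / Real.Gamma ((k : ℝ) + 2 - α))) :
    ∀ t ∈ Set.Ico (0:ℝ) T,
      Real.exp (-δ * t) * r * (1 - 2 * x t / K) -
        δ / Real.Gamma (1 - α) * (∫ s in t..T, (s - t) ^ (-α) * Real.exp (-δ * s)) = 0 ∧
      Real.exp (-δ * t) * r * (1 - 2 * x t / K) -
        δ * (T - t) ^ (1 - α) * Real.exp (-δ * T) *
          (∑' k : ℕ, (δ * (T - t)) ^ k / Real.Gamma ((k : ℝ) + 2 - α)) = 0 :=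
  fractional_optimal_population_satisfies_euler_lagrange_general α r K δ T hα1 hr hK x hx
end
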